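/- Let h : G ↷ H be a free and proper actor between étale groupoids with surjective anchor ρ : H → G⁽⁰⁾. Then the map i : G ⋉ H⁽⁰⁾ → H, (γ, t) ↦ γ·t, from the transformation groupoid of the action restricted to the unit space, is a continuous injective open groupoid homomorphism fixing the unit space; and the projection p : G ⋉ H⁽⁰⁾ → G, (γ, t) ↦ γ, is a continuous, surjective, proper, fibrewise bijective groupoid homomorphism. -/

import Mathlib

open Topology

/-- A topological groupoid: a set with a partially defined multiplication
(`D a b` expresses composability), an inversion, satisfying the groupoid
axioms, such that inversion is continuous and multiplication is continuous
on the set of composable pairs. -/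
structure TopGroupoid (G : Type*) [TopologicalSpace G] where
  /-- composability -/
  D : G → G → Prop
  /-- partially defined multiplication (junk values off `D`) -/
  comp : G → G → G
  /-- inversion -/
  inv : G → G
  inv_inv : ∀ g, inv (inv g) = g
  d_inv : ∀ g, D g (inv g)
  d_eq : ∀ a b, D a b ↔ comp (inv a) a = comp b (inv b)
  d_comp_left : ∀ {a b c}, D a b → D b c → D (comp a b) c
  d_comp_right : ∀ {a b c}, D a b → D b c → D a (comp b c)
  assoc : ∀ {a b c}, D a b → D b c → comp (comp a b) c = comp a (comp b c)
  cancel_left : ∀ {g h}, D g h → comp (inv g) (comp g h) = h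
  cancel_right : ∀ {g h}, D g h → comp (comp g h) (inv h) = g
  continuous_inv : Continuous inv
  continuousOn_comp : ContinuousOn (fun p : G × G => comp p.1 p.2) {p | D p.1 p.2}

namespace TopGroupoid

variable {G : Type*} [TopologicalSpace G]

/-- The source map `s(γ) = γ⁻¹γ`. -/
def src (S : TopGroupoid G) (g : G) : G := S.comp (S.inv g) g

/-- The range map `r(γ) = γγ⁻¹`. -/
def rng (S : TopGroupoid G) (g : G) : G := S.comp g (S.inv g)

/-- The unit space `G⁽⁰⁾ = {γ⁻¹γ : γ ∈ G}`. -/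
def unitSpace (S : TopGroupoid G) : Set G := Set.range S.src

/-- A groupoid is étale if its range map is a local homeomorphism. -/
def IsEtale (S : TopGroupoid G) : Prop := IsLocalHomeomorph S.rng

/-- An open bisection: an open set on which both the source and the range map
are injective (hence, in an étale groupoid, restrict to homeomorphisms onto
their open images). -/
def IsOpenBisection (S : TopGroupoid G) (U : Set G) : Prop :=
  IsOpen U ∧ Set.InjOn S.src U ∧ Set.InjOn S.rng U

/-- Pointwise product of subsets: `U·V = {γη : γ ∈ U, η ∈ V, s γ = r η}`. -/
def setMul (S : TopGroupoid G) (U V : Set G) : Set G :=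
  {g | ∃ a ∈ U, ∃ b ∈ V, S.D a b ∧ g = S.comp a b}

/-- Pointwise inverse of a subset: `U⁻¹ = {γ⁻¹ : γ ∈ U}`. -/
def setInv (S : TopGroupoid G) (U : Set G) : Set G := S.inv '' U

end TopGroupoid

/-- An actor `G ↷ H`: a continuous left action of `G` on `H` (with anchor map
`ρ : H → G⁽⁰⁾`) which commutes with the right multiplication of `H` on itself. -/
structure Actor {G : Type*} {H : Type*} [TopologicalSpace G] [TopologicalSpace H]
    (S : TopGroupoid G) (T : TopGroupoid H) where
  /-- the anchor map -/
  rho : H → G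
  /-- the action multiplication, partially defined (junk off `s γ = ρ x`) -/
  act : G → H → H
  rho_mem : ∀ x, rho x ∈ S.unitSpace
  continuous_rho : Continuous rho
  continuousOn_act :
    ContinuousOn (fun p : G × H => act p.1 p.2) {p | S.src p.1 = rho p.2}
  rho_act : ∀ {γ x}, S.src γ = rho x → rho (act γ x) = S.rng γ
  act_assoc : ∀ {γ₁ γ₂ x}, S.D γ₁ γ₂ → S.src γ₂ = rho x →
      act γ₁ (act γ₂ x) = act (S.comp γ₁ γ₂) x
  act_unit : ∀ x, act (rho x) x = x
  rho_comp : ∀ {x y}, T.D x y → rho (T.comp x y) = rho x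
  src_act : ∀ {γ x}, S.src γ = rho x → T.src (act γ x) = T.src x
  act_right : ∀ {γ x y}, S.src γ = rho x → T.D x y →
      act γ (T.comp x y) = T.comp (act γ x) y

namespace Actor

variable {G H : Type*} [TopologicalSpace G] [TopologicalSpace H]
variable {S : TopGroupoid G} {T : TopGroupoid H}

/-- An actor is free if the only arrows fixing a unit are units. -/
def Free (A : Actor S T) : Prop :=
  ∀ t ∈ T.unitSpace, ∀ γ : G, S.src γ = A.rho t → A.act γ t = t → γ ∈ S.unitSpace

/-- An actor is proper if the anchor map restricted to the unit space of `H`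
is a proper map. -/
def Proper (A : Actor S T) : Prop := IsProperMap (T.unitSpace.restrict A.rho)

/-- `U·V = {γ·x : γ ∈ U, x ∈ V, s γ = ρ x}`. -/
def actSet (A : Actor S T) (U : Set G) (V : Set H) : Set H :=
  {y | ∃ γ ∈ U, ∃ x ∈ V, S.src γ = A.rho x ∧ y = A.act γ x}

end Actor

/-- The carrier of the transformation groupoid `G ⋉ H⁽⁰⁾` associated to an
actor `G ↷ H` restricted to the unit space of `H`. -/
abbrev TransK {G H : Type*} [TopologicalSpace G] [TopologicalSpace H]
    {S : TopGroupoid G} {T : TopGroupoid H} (A : Actor S T) : Type _ :=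
  {q : G × H // q.2 ∈ T.unitSpace ∧ S.src q.1 = A.rho q.2}

/-!
If `γ·t = η·u` with `t, u` units of `H`, then `t = u` (both are the source of `γ·t`) and
`η⁻¹γ` fixes `t`, so freeness makes it a unit and `γ = η`. For openness, near `z₀ = γ₀·t₀`
send `z` to `(σ (ρ (s z)), s z)`, where `σ` is a local section of the étale source map of `G`
through `γ₀`: then `σ (ρ (s z))·s z` has the same source as `z` and equals `z` at `z₀`, so it
equals `z` near `z₀` because the source map of `H` is locally injective. The projection to `G`
is the base change of the proper map `ρ|H⁽⁰⁾` along the source map, hence proper.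
-/

theorem IsLocallyInjective.eventually_eq_self_of_comp_eq {X Y : Type*} [TopologicalSpace X]
    {f : X → Y} (hf : IsLocallyInjective f)
    {θ : X → X} {x : X} (hθ : ContinuousAt θ x) (hθx : θ x = x)
    (hfθ : ∀ᶠ z in 𝓝 x, f (θ z) = f z) : ∀ᶠ z in 𝓝 x, θ z = z := by
  obtain ⟨U, hU, hxU, hinj⟩ := hf x
  have hU' : U ∈ 𝓝 (θ x) := by rw [hθx]; exact hU.mem_nhds hxU
  filter_upwards [hU.mem_nhds hxU, hθ.preimage_mem_nhds hU', hfθ] with z hz hθz hfz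
  exact hinj hθz hz hfz

theorem isOpenMap_subtype_of_local_sections {X Y : Type*} [TopologicalSpace X]
    [TopologicalSpace Y] {P : X → Prop} {f : X → Y}
    (h : ∀ x, P x → ∃ g : Y → X, ContinuousAt g (f x) ∧ g (f x) = x ∧
      ∀ᶠ y in 𝓝 (f x), P (g y) ∧ f (g y) = y) :
    IsOpenMap fun x : Subtype P => f x.1 := by
  refine IsOpenMap.of_nhds_le fun ⟨x, hx⟩ N hN => ?_
  obtain ⟨g, hg, hgx, hsec⟩ := h x hx
  obtain ⟨U, hU, hUN⟩ := (nhds_subtype_eq_comap (h := hx) ▸ hN : _ ∈ Filter.comap _ _)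
  filter_upwards [hg.preimage_mem_nhds (hgx ▸ hU), hsec] with y hyU ⟨hPy, hfy⟩
  exact hfy ▸ hUN (a := ⟨g y, hPy⟩) hyU

theorem IsProperMap.fst_pullback_domRestrict {X Y Z : Type*} [TopologicalSpace X]
    [TopologicalSpace Y] [TopologicalSpace Z] {s : Set X} {f : X → Z}
    (hf : IsProperMap (s.domRestrict f))
    {g : Y → Z} (hg : Continuous g) :
    IsProperMap fun p : {p : Y × X // p.2 ∈ s ∧ g p.1 = f p.2} => p.1.1 := by
  refine isProperMap_iff_ultrafilter.mpr ⟨continuous_fst.comp continuous_subtype_val, ?_⟩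
  intro 𝒰 y h𝒰
  let π : {p : Y × X // p.2 ∈ s ∧ g p.1 = f p.2} → s := fun p => ⟨p.1.2, p.2.1⟩
  have hfπ : Filter.Tendsto (s.domRestrict f) (𝒰.map π) (𝓝 (g y)) := by
    rw [Ultrafilter.coe_map, Filter.tendsto_map'_iff]
    exact ((hg.tendsto y).comp h𝒰).congr
      fun p : {p : Y × X // p.2 ∈ s ∧ g p.1 = f p.2} => p.2.2
  obtain ⟨x, hfx, hπx⟩ := hf.ultrafilter_le_nhds_of_tendsto hfπ
  rw [Ultrafilter.coe_map] at hπx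
  have hsnd : Filter.Tendsto (fun p => (π p : X)) 𝒰 (𝓝 (x : X)) :=
    (continuous_subtype_val.tendsto x).comp hπx
  refine ⟨⟨(y, x), x.2, hfx.symm⟩, rfl, ?_⟩
  rw [nhds_subtype_eq_comap, ← Filter.map_le_iff_le_comap]
  exact h𝒰.prodMk_nhds hsnd

namespace TopGroupoid

variable {G : Type*} [TopologicalSpace G] {S : TopGroupoid G}

theorem D_iff {a b : G} : S.D a b ↔ S.src a = S.rng b := S.d_eq a b

theorem D_inv_left (g : G) : S.D (S.inv g) g := by
  simpa only [S.inv_inv] using S.d_inv (S.inv g)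

theorem src_inv (g : G) : S.src (S.inv g) = S.rng g := by
  simp only [src, rng, S.inv_inv]

theorem rng_inv (g : G) : S.rng (S.inv g) = S.src g := by
  simp only [src, rng, S.inv_inv]

theorem comp_src_self (g : G) : S.comp g (S.src g) = g := by
  show S.comp g (S.comp (S.inv g) g) = g
  simpa only [S.inv_inv] using S.cancel_left (D_inv_left g)

theorem rng_self_comp (g : G) : S.comp (S.rng g) g = g := by
  rw [rng, S.assoc (S.d_inv g) (D_inv_left g)]
  exact comp_src_self g

theorem src_comp {g h : G} (hgh : S.D g h) : S.src (S.comp g h) = S.src h := by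
  simpa only [rng_inv] using D_iff.mp (S.d_comp_left hgh (S.d_inv h))

theorem rng_comp {g h : G} (hgh : S.D g h) : S.rng (S.comp g h) = S.rng g := by
  simpa only [src_inv] using (D_iff.mp (S.d_comp_right (D_inv_left g) hgh)).symm

theorem src_mem_unitSpace (g : G) : S.src g ∈ S.unitSpace := ⟨g, rfl⟩

theorem src_of_mem_unitSpace {u : G} (hu : u ∈ S.unitSpace) : S.src u = u := by
  obtain ⟨g, rfl⟩ := hu
  exact src_comp (D_inv_left g)

theorem rng_of_mem_unitSpace {u : G} (hu : u ∈ S.unitSpace) : S.rng u = u := by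
  obtain ⟨g, rfl⟩ := hu
  rw [src, rng_comp (D_inv_left g), rng_inv, src]

theorem IsEtale.isLocalHomeomorph_src (hS : S.IsEtale) : IsLocalHomeomorph S.src := by
  have hsrc : S.src = S.rng ∘ S.inv := funext fun g => (rng_inv g).symm
  let invHomeomorph : G ≃ₜ G :=
    { toFun := S.inv, invFun := S.inv, left_inv := S.inv_inv, right_inv := S.inv_inv
      continuous_toFun := S.continuous_inv, continuous_invFun := S.continuous_inv }
  rw [hsrc]
  exact hS.comp invHomeomorph.isLocalHomeomorph

end TopGroupoid

namespace Actor

open TopGroupoid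

variable {G H : Type*} [TopologicalSpace G] [TopologicalSpace H]
variable {S : TopGroupoid G} {T : TopGroupoid H} (A : Actor S T)

theorem act_inv_act {γ : G} {x : H} (h : S.src γ = A.rho x) :
    A.act (S.inv γ) (A.act γ x) = x := by
  rw [A.act_assoc (D_inv_left γ) h]
  exact (congrArg (A.act · x) h).trans (A.act_unit x)

theorem act_of_mem_unitSpace {γ : G} {x : H} (hγ : γ ∈ S.unitSpace) (h : S.src γ = A.rho x) :
    A.act γ x = x := by
  rw [← src_of_mem_unitSpace hγ, h, A.act_unit]

theorem src_act_of_mem_unitSpace {γ : G} {t : H} (ht : t ∈ T.unitSpace)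
    (h : S.src γ = A.rho t) : T.src (A.act γ t) = t := by
  rw [A.src_act h, src_of_mem_unitSpace ht]

theorem D_of_eq_rng_act {γ η : G} {x y : H} (hγ : S.src γ = A.rho x)
    (hη : S.src η = A.rho y) (hx : x = T.rng (A.act η y)) : S.D γ η := by
  rw [D_iff, hγ, hx, rng, A.rho_comp (T.d_inv _), A.rho_act hη]

theorem act_comp {γ η : G} {x y : H} (hx : x ∈ T.unitSpace) (hγ : S.src γ = A.rho x)
    (hη : S.src η = A.rho y) (hxy : x = T.rng (A.act η y)) :
    A.act (S.comp γ η) y = T.comp (A.act γ x) (A.act η y) := by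
  have hD : T.D x (A.act η y) := by rw [D_iff, src_of_mem_unitSpace hx, hxy]
  rw [← A.act_right hγ hD, hxy, rng_self_comp, A.act_assoc (A.D_of_eq_rng_act hγ hη hxy) hη]

theorem eq_of_act_eq (hfree : A.Free) {γ η : G} {x y : H}
    (hx : x ∈ T.unitSpace) (hy : y ∈ T.unitSpace)
    (hγ : S.src γ = A.rho x) (hη : S.src η = A.rho y)
    (heq : A.act γ x = A.act η y) : γ = η ∧ x = y := by
  obtain rfl : x = y := by
    rw [← A.src_act_of_mem_unitSpace hx hγ, heq, A.src_act_of_mem_unitSpace hy hη]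
  have hD : S.D (S.inv η) γ := by
    rw [D_iff, src_inv, ← A.rho_act hγ, ← A.rho_act hη, heq]
  have hfix : A.act (S.comp (S.inv η) γ) x = x := by
    rw [← A.act_assoc hD hγ, heq, A.act_inv_act hη]
  have hunit := hfree x hx _ (by rw [src_comp hD, hγ]) hfix
  have hδ : S.comp (S.inv η) γ = S.src η := by
    rw [← rng_of_mem_unitSpace hunit, rng_comp hD, rng_inv]
  refine ⟨?_, rfl⟩
  calc γ = S.comp η (S.comp (S.inv η) γ) := by
        simpa only [S.inv_inv] using (S.cancel_left hD).symm
    _ = η := by rw [hδ, comp_src_self]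

theorem exists_local_section_act (hS : S.IsEtale) (hT : T.IsEtale) {γ₀ : G} {t₀ : H}
    (ht₀ : t₀ ∈ T.unitSpace) (hγ₀ : S.src γ₀ = A.rho t₀) :
    ∃ g : H → G × H, ContinuousAt g (A.act γ₀ t₀) ∧ g (A.act γ₀ t₀) = (γ₀, t₀) ∧
      ∀ᶠ z in 𝓝 (A.act γ₀ t₀),
        ((g z).2 ∈ T.unitSpace ∧ S.src (g z).1 = A.rho (g z).2) ∧ A.act (g z).1 (g z).2 = z := by
  set z₀ := A.act γ₀ t₀
  have hsrcS := hS.isLocalHomeomorph_src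
  have hsrcT := hT.isLocalHomeomorph_src
  set σ := hsrcS.localInverseAt γ₀
  have hρs : Continuous fun z => A.rho (T.src z) := A.continuous_rho.comp hsrcT.continuous
  have hz₀ : T.src z₀ = t₀ := A.src_act_of_mem_unitSpace ht₀ hγ₀
  have hmem : A.rho (T.src z₀) ∈ σ.source := by
    rw [hz₀, ← hγ₀]; exact hsrcS.apply_self_mem_localInverseAt_source
  let g : H → G × H := fun z => (σ (A.rho (T.src z)), T.src z)
  have hg : ContinuousAt g z₀ :=
    ((σ.continuousAt hmem).comp (f := fun z => A.rho (T.src z)) hρs.continuousAt).prodMk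
      hsrcT.continuous.continuousAt
  have hgz₀ : g z₀ = (γ₀, t₀) := by
    simp only [g, hz₀, ← hγ₀]
    exact congrArg (·, t₀) hsrcS.localInverseAt_apply_self
  have hgC : ∀ᶠ z in 𝓝 z₀, T.src z ∈ T.unitSpace ∧ S.src (g z).1 = A.rho (T.src z) :=
    Filter.mem_of_superset (hρs.continuousAt.preimage_mem_nhds (σ.open_source.mem_nhds hmem))
      fun z hz => ⟨src_mem_unitSpace z, hsrcS.apply_localInverseAt_of_mem hz⟩
  have hact : ContinuousAt (fun z => A.act (g z).1 (g z).2) z₀ := by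
    have hwithin := A.continuousOn_act (g z₀) (by rw [hgz₀]; exact hγ₀)
    exact hwithin.tendsto.comp (tendsto_nhdsWithin_iff.mpr ⟨hg, hgC.mono fun z hz => hz.2⟩)
  refine ⟨g, hg, hgz₀, hgC.and ?_⟩
  refine hsrcT.isLocallyInjective.eventually_eq_self_of_comp_eq hact (by rw [hgz₀]) ?_
  filter_upwards [hgC] with z hz
  rw [A.src_act hz.2, src_of_mem_unitSpace hz.1]

end Actor

/-- For a free and proper actor `h : G ↷ H` with surjective anchor:
the map `i : G ⋉ H⁽⁰⁾ → H`, `(γ, t) ↦ γ·t`, is continuous, injective, open,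
is a groupoid homomorphism (for the transformation-groupoid multiplication
`(γ, x)(η, y) = (γη, y)` defined when `x = r(η·y)`), and fixes the unit space;
and the projection `p : G ⋉ H⁽⁰⁾ → G`, `(γ, t) ↦ γ`, is a continuous,
surjective, proper, fibrewise bijective groupoid homomorphism. -/
theorem transformation_groupoid_maps {G H : Type*} [TopologicalSpace G]
    [TopologicalSpace H] {S : TopGroupoid G} {T : TopGroupoid H}
    (hS : S.IsEtale) (hT : T.IsEtale) (A : Actor S T)
    (hfree : A.Free) (hproper : A.Proper)
    (hsurj : ∀ u ∈ S.unitSpace, ∃ t ∈ T.unitSpace, A.rho t = u) :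
    -- the embedding i
    Continuous (fun q : TransK A => A.act q.1.1 q.1.2) ∧
    Function.Injective (fun q : TransK A => A.act q.1.1 q.1.2) ∧
    IsOpenMap (fun q : TransK A => A.act q.1.1 q.1.2) ∧
    -- i is a groupoid homomorphism for the transformation groupoid product
    (∀ (γ η : G) (x y : H), x ∈ T.unitSpace → y ∈ T.unitSpace →
      S.src γ = A.rho x → S.src η = A.rho y → x = T.rng (A.act η y) →
      A.act (S.comp γ η) y = T.comp (A.act γ x) (A.act η y)) ∧
    -- i fixes the unit space (units of G ⋉ H⁽⁰⁾ are pairs with unit first coordinate)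
    (∀ q : TransK A, q.1.1 ∈ S.unitSpace → A.act q.1.1 q.1.2 = q.1.2) ∧
    -- the projection p
    Continuous (fun q : TransK A => q.1.1) ∧
    (∀ γ : G, ∃ q : TransK A, q.1.1 = γ) ∧
    IsProperMap (fun q : TransK A => q.1.1) ∧
    (∀ (γ η : G) (x y : H) (hx : x ∈ T.unitSpace) (hy : y ∈ T.unitSpace)
      (hγ : S.src γ = A.rho x) (hη : S.src η = A.rho y),
      x = T.rng (A.act η y) → S.D γ η) ∧  -- p preserves composability
    (∀ y ∈ T.unitSpace, Set.BijOn (fun q : TransK A => q.1.1)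
      {q : TransK A | q.1.2 = y} {γ : G | S.src γ = A.rho y}) := by
  refine ⟨A.continuousOn_act.comp_continuous continuous_subtype_val fun q => q.2.2, ?_, ?_, ?_, ?_,
    continuous_fst.comp continuous_subtype_val, ?_, ?_, ?_, ?_⟩
  · rintro ⟨⟨γ, x⟩, hx, hγ⟩ ⟨⟨η, y⟩, hy, hη⟩ heq
    obtain ⟨rfl, rfl⟩ := A.eq_of_act_eq hfree hx hy hγ hη heq
    rfl
  · refine isOpenMap_subtype_of_local_sections (f := fun p : G × H => A.act p.1 p.2) ?_
    rintro q ⟨ht, hγ⟩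
    exact A.exists_local_section_act hS hT ht hγ
  · exact fun γ η x y hx _ hγ hη hxy => A.act_comp hx hγ hη hxy
  · exact fun q hq => A.act_of_mem_unitSpace hq q.2.2
  · intro γ
    obtain ⟨t, ht, hρt⟩ := hsurj (S.src γ) (TopGroupoid.src_mem_unitSpace γ)
    exact ⟨⟨(γ, t), ht, hρt.symm⟩, rfl⟩
  · exact hproper.fst_pullback_domRestrict hS.isLocalHomeomorph_src.continuous
  · exact fun γ η x y _ _ hγ hη hxy => A.D_of_eq_rng_act hγ hη hxy
  · intro y hy
    refine ⟨fun q hq => hq ▸ q.2.2, ?_, fun γ hγ => ⟨⟨(γ, y), hy, hγ⟩, rfl, rfl⟩⟩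
    rintro ⟨⟨γ₁, x₁⟩, h₁⟩ rfl ⟨⟨γ₂, x₂⟩, h₂⟩ hx₂ rfl
    obtain rfl : x₂ = x₁ := hx₂
    rfl
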